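/- Let t, r, φ, z : ℝ → ℝ be a geodesic of Gödel's universe, fix u₀ ∈ ℝ, and set c₁ = C₁(u₀), c₂ = C₂(u₀), A = P_{2,0}(u₀), B = P_{0,1}(u₀). Then there exists a real number m such that for every u ∈ ℝ: c₂·sin(φ(u)) − c₁·cos(φ(u)) = (2√2/sinh(2r(u)))·(A·cosh(2r(u)) − B·cosh(r(u))²) + m. -/

import Mathlib

open Real

/-- A function is twice differentiable (everywhere on ℝ). -/
def TwiceDiff (f : ℝ → ℝ) : Prop :=
  Differentiable ℝ f ∧ Differentiable ℝ (deriv f)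

/-- The four geodesic differential equations of Gödel's universe in
cylindrical coordinates. -/
def GodelGeodesicEqns (t r φ z : ℝ → ℝ) : Prop :=
  ∀ u : ℝ,
    (deriv (deriv t) u + 4 * Real.tanh (r u) * deriv t u * deriv r u
      + 2 * Real.sqrt 2 * (Real.sinh (r u) ^ 3 / Real.cosh (r u)) * deriv φ u * deriv r u = 0)
    ∧ (deriv (deriv r) u
      + 2 * Real.sqrt 2 * Real.sinh (r u) * Real.cosh (r u) * deriv t u * deriv φ u
      + Real.sinh (r u) * Real.cosh (r u) * (2 * Real.cosh (r u) ^ 2 - 3) * (deriv φ u) ^ 2 = 0)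
    ∧ (deriv (deriv φ) u * Real.sinh (r u) * Real.cosh (r u)
      - 2 * Real.sqrt 2 * deriv t u * deriv r u + 2 * deriv φ u * deriv r u = 0)
    ∧ (deriv (deriv z) u = 0)

/-- The conserved momentum quantity `P_{ρ₁,ρ₂}` along a curve. -/
noncomputable def godelP (t r φ : ℝ → ℝ) (ρ₁ ρ₂ : ℝ) (u : ℝ) : ℝ :=
  (ρ₂ + ρ₁ * Real.cosh (r u) ^ 2 / 2) * deriv t u
    + ((ρ₁ * Real.cosh (r u) ^ 2 + 4 * ρ₂) * Real.sinh (r u) ^ 2 / (2 * Real.sqrt 2)) * deriv φ u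

/-- The conserved quantity `C₁` along a curve. -/
noncomputable def godelC1 (t r φ : ℝ → ℝ) (u : ℝ) : ℝ :=
  -(Real.sqrt 2) * Real.cos (φ u) * Real.sinh (2 * r u) * deriv t u
    + Real.sin (φ u) * deriv r u
    - Real.cos (φ u) * (Real.cosh (2 * r u) - 2) * Real.sinh (2 * r u) / 2 * deriv φ u

/-- The conserved quantity `C₂` along a curve. -/
noncomputable def godelC2 (t r φ : ℝ → ℝ) (u : ℝ) : ℝ :=
  Real.sqrt 2 * Real.sin (φ u) * Real.sinh (2 * r u) * deriv t u
    + Real.cos (φ u) * deriv r u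
    + Real.sin (φ u) * (Real.cosh (2 * r u) - 2) * Real.sinh (2 * r u) / 2 * deriv φ u

/-!
The quantities `C₁`, `C₂` and `P_{ρ₁,ρ₂}` are first integrals of the geodesic equations. For `C₁`
and `C₂` the reason is that, with `W = √2 sinh 2r · t' + (cosh 2r − 2) sinh 2r / 2 · φ'`, the
`r`-equation reads `r'' = −φ' W` and the `t`- and `φ`-equations give `W' = φ' r'`: the plane vector
`(r', W)` turns with angle `φ`, so its components `(C₂, −C₁)` in the frame rotated by `φ` are
constant, and `W = C₂ sin φ − C₁ cos φ`. Along any curve with `r ≠ 0`,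
`W = 2√2 / sinh 2r · (P_{2,0} cosh 2r − P_{0,1} cosh² r)` holds pointwise, so the orbit equation
holds with `m = 0`.
-/

noncomputable def godelW (t r φ : ℝ → ℝ) (u : ℝ) : ℝ :=
  √2 * sinh (2 * r u) * deriv t u + (cosh (2 * r u) - 2) * sinh (2 * r u) / 2 * deriv φ u

lemma hasDerivAt_sin_mul_sub_cos_mul {θ a b : ℝ → ℝ} {θ' x : ℝ} (hθ : HasDerivAt θ θ' x)
    (ha : HasDerivAt a (-(θ' * b x)) x) (hb : HasDerivAt b (θ' * a x) x) :
    HasDerivAt (fun y => sin (θ y) * a y - cos (θ y) * b y) 0 x :=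
  ((hθ.sin.mul ha).sub (hθ.cos.mul hb)).congr_deriv (by ring)

lemma hasDerivAt_cos_mul_add_sin_mul {θ a b : ℝ → ℝ} {θ' x : ℝ} (hθ : HasDerivAt θ θ' x)
    (ha : HasDerivAt a (-(θ' * b x)) x) (hb : HasDerivAt b (θ' * a x) x) :
    HasDerivAt (fun y => cos (θ y) * a y + sin (θ y) * b y) 0 x :=
  ((hθ.cos.mul ha).add (hθ.sin.mul hb)).congr_deriv (by ring)

section AnyCurve

variable (t r φ : ℝ → ℝ)

lemma godelC1_eq : godelC1 t r φ = fun u => sin (φ u) * deriv r u - cos (φ u) * godelW t r φ u := by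
  funext u
  simp only [godelC1, godelW]
  ring

lemma godelC2_eq : godelC2 t r φ = fun u => cos (φ u) * deriv r u + sin (φ u) * godelW t r φ u := by
  funext u
  simp only [godelC2, godelW]
  ring

lemma godelC2_mul_sin_sub_godelC1_mul_cos (u : ℝ) :
    godelC2 t r φ u * sin (φ u) - godelC1 t r φ u * cos (φ u) = godelW t r φ u := by
  rw [godelC1_eq, godelC2_eq]
  linear_combination godelW t r φ u * sin_sq_add_cos_sq (φ u)

lemma godelP_eq (ρ₁ ρ₂ : ℝ) : godelP t r φ ρ₁ ρ₂ = fun u =>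
    (ρ₂ + ρ₁ * cosh (r u) ^ 2 / 2) * deriv t u
      + √2 / 4 * ((ρ₁ * cosh (r u) ^ 2 + 4 * ρ₂) * sinh (r u) ^ 2) * deriv φ u := by
  funext u
  have hsqrt : √2 ≠ 0 := by positivity
  simp only [godelP]
  field_simp
  linear_combination
    -2 * (ρ₁ * cosh (r u) ^ 2 + 4 * ρ₂) * sinh (r u) ^ 2 * deriv φ u * Real.sq_sqrt zero_le_two

lemma godelW_eq_of_ne_zero {u : ℝ} (hr : r u ≠ 0) :
    godelW t r φ u = 2 * √2 / sinh (2 * r u)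
      * (godelP t r φ 2 0 u * cosh (2 * r u) - godelP t r φ 0 1 u * cosh (r u) ^ 2) := by
  have hsinh : sinh (2 * r u) ≠ 0 := by simpa using hr
  rw [div_mul_eq_mul_div, eq_div_iff hsinh, godelP_eq, godelP_eq, godelW]
  simp only [sinh_two_mul, cosh_two_mul]
  linear_combination (-2 * √2 * cosh (r u) ^ 2 * deriv t u) * cosh_sq (r u)
    - cosh (r u) ^ 2 * sinh (r u) ^ 2 * (cosh (r u) ^ 2 + sinh (r u) ^ 2 - 2) * deriv φ u
      * Real.sq_sqrt zero_le_two

end AnyCurve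

section Geodesic

variable {t r φ z : ℝ → ℝ}

lemma GodelGeodesicEqns.cosh_mul_deriv_deriv_t (hgeo : GodelGeodesicEqns t r φ z) (u : ℝ) :
    cosh (r u) * deriv (deriv t) u + 4 * sinh (r u) * deriv t u * deriv r u
      + 2 * √2 * sinh (r u) ^ 3 * deriv φ u * deriv r u = 0 := by
  have h := (hgeo u).1
  rw [tanh_eq_sinh_div_cosh] at h
  field_simp at h
  linear_combination h

lemma GodelGeodesicEqns.deriv_deriv_r (hgeo : GodelGeodesicEqns t r φ z) (u : ℝ) :
    deriv (deriv r) u = -(deriv φ u * godelW t r φ u) := by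
  rw [godelW, sinh_two_mul, cosh_two_mul]
  linear_combination (hgeo u).2.1 - sinh (r u) * cosh (r u) * deriv φ u ^ 2 * cosh_sq (r u)

variable (ht : TwiceDiff t) (hr : TwiceDiff r) (hφ : TwiceDiff φ) (hgeo : GodelGeodesicEqns t r φ z)
include ht hr hφ hgeo

lemma hasDerivAt_godelW (u : ℝ) : HasDerivAt (godelW t r φ) (deriv φ u * deriv r u) u := by
  have h2r := (hr.1 u).hasDerivAt.const_mul 2
  have H := ((h2r.sinh.const_mul √2).mul (ht.2 u).hasDerivAt).add
    ((((h2r.cosh.sub_const 2).mul h2r.sinh).div_const 2).mul (hφ.2 u).hasDerivAt)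
  refine H.congr_deriv ?_
  simp only [Pi.mul_apply, sinh_two_mul, cosh_two_mul]
  linear_combination 2 * √2 * sinh (r u) * hgeo.cosh_mul_deriv_deriv_t u
    + (cosh (r u) ^ 2 + sinh (r u) ^ 2 - 2) * (hgeo u).2.2.1
    - 4 * sinh (r u) ^ 4 * deriv φ u * deriv r u * Real.sq_sqrt zero_le_two
    + (4 * √2 * deriv t u * deriv r u
      + deriv φ u * deriv r u * (cosh (r u) ^ 2 + 7 * sinh (r u) ^ 2 - 3)) * cosh_sq (r u)

lemma hasDerivAt_godelC1 (u : ℝ) : HasDerivAt (godelC1 t r φ) 0 u := by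
  rw [godelC1_eq]
  exact hasDerivAt_sin_mul_sub_cos_mul (hφ.1 u).hasDerivAt
    (hgeo.deriv_deriv_r u ▸ (hr.2 u).hasDerivAt) (hasDerivAt_godelW ht hr hφ hgeo u)

lemma hasDerivAt_godelC2 (u : ℝ) : HasDerivAt (godelC2 t r φ) 0 u := by
  rw [godelC2_eq]
  exact hasDerivAt_cos_mul_add_sin_mul (hφ.1 u).hasDerivAt
    (hgeo.deriv_deriv_r u ▸ (hr.2 u).hasDerivAt) (hasDerivAt_godelW ht hr hφ hgeo u)

lemma hasDerivAt_godelP (ρ₁ ρ₂ u : ℝ) : HasDerivAt (godelP t r φ ρ₁ ρ₂) 0 u := by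
  rw [godelP_eq]
  have hcosh := (hr.1 u).hasDerivAt.cosh
  have hsinh := (hr.1 u).hasDerivAt.sinh
  have hcoeft := (((hcosh.pow 2).const_mul ρ₁).div_const 2).const_add ρ₂
  have hcoefφ :=
    ((((hcosh.pow 2).const_mul ρ₁).add_const (4 * ρ₂)).mul (hsinh.pow 2)).const_mul (√2 / 4)
  have H := (hcoeft.mul (ht.2 u).hasDerivAt).add (hcoefφ.mul (hφ.2 u).hasDerivAt)
  refine H.congr_deriv (mul_left_cancel₀ (cosh_pos (r u)).ne' ?_)
  simp only [Pi.mul_apply, Pi.pow_apply]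
  linear_combination (ρ₂ + ρ₁ * cosh (r u) ^ 2 / 2) * hgeo.cosh_mul_deriv_deriv_t u
    + √2 / 4 * (ρ₁ * cosh (r u) ^ 2 + 4 * ρ₂) * sinh (r u) * (hgeo u).2.2.1
    + (ρ₁ * cosh (r u) ^ 2 + 4 * ρ₂) * sinh (r u) * deriv t u * deriv r u / 2
      * Real.sq_sqrt zero_le_two
    + √2 * sinh (r u) * (ρ₁ * cosh (r u) ^ 2 / 2 + 2 * ρ₂) * deriv φ u * deriv r u * cosh_sq (r u)

end Geodesic

theorem godel_orbit_equation_general (t r φ z : ℝ → ℝ)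
    (ht : TwiceDiff t) (hr : TwiceDiff r) (hφ : TwiceDiff φ)
    (hrpos : ∀ u, 0 < r u)
    (hgeo : GodelGeodesicEqns t r φ z)
    (u₀ : ℝ) (c₁ c₂ A B : ℝ)
    (hc₁ : c₁ = godelC1 t r φ u₀) (hc₂ : c₂ = godelC2 t r φ u₀)
    (hA : A = godelP t r φ 2 0 u₀) (hB : B = godelP t r φ 0 1 u₀) :
    ∃ m : ℝ, ∀ u : ℝ,
      c₂ * Real.sin (φ u) - c₁ * Real.cos (φ u)
        = 2 * Real.sqrt 2 / Real.sinh (2 * r u)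
            * (A * Real.cosh (2 * r u) - B * Real.cosh (r u) ^ 2) + m := by
  have conserved {f : ℝ → ℝ} (hf : ∀ u, HasDerivAt f 0 u) (u : ℝ) : f u₀ = f u :=
    is_const_of_deriv_eq_zero (fun x => (hf x).differentiableAt) (fun x => (hf x).deriv) u₀ u
  refine ⟨0, fun u => ?_⟩
  rw [add_zero, hc₁, hc₂, hA, hB,
    conserved (hasDerivAt_godelC1 ht hr hφ hgeo) u, conserved (hasDerivAt_godelC2 ht hr hφ hgeo) u,
    conserved (hasDerivAt_godelP ht hr hφ hgeo 2 0) u, conserved (hasDerivAt_godelP ht hr hφ hgeo 0 1) u,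
    godelC2_mul_sin_sub_godelC1_mul_cos]
  exact godelW_eq_of_ne_zero t r φ (hrpos u).ne'

/-- Along a geodesic there is a constant `m` such that
`c₂·sin φ − c₁·cos φ = (2√2/sinh 2r)·(A·cosh 2r − B·cosh(r)²) + m`. -/
theorem godel_orbit_equation (t r φ z : ℝ → ℝ)
    (ht : TwiceDiff t) (hr : TwiceDiff r) (hφ : TwiceDiff φ) (hz : TwiceDiff z)
    (hrpos : ∀ u, 0 < r u)
    (hgeo : GodelGeodesicEqns t r φ z)
    (u₀ : ℝ) (c₁ c₂ A B : ℝ)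
    (hc₁ : c₁ = godelC1 t r φ u₀) (hc₂ : c₂ = godelC2 t r φ u₀)
    (hA : A = godelP t r φ 2 0 u₀) (hB : B = godelP t r φ 0 1 u₀) :
    ∃ m : ℝ, ∀ u : ℝ,
      c₂ * Real.sin (φ u) - c₁ * Real.cos (φ u)
        = 2 * Real.sqrt 2 / Real.sinh (2 * r u)
            * (A * Real.cosh (2 * r u) - B * Real.cosh (r u) ^ 2) + m :=
  godel_orbit_equation_general t r φ z ht hr hφ hrpos hgeo u₀ c₁ c₂ A B hc₁ hc₂ hA hB
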